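/- arXiv:1811.06083 — 3 statements merged into one kernel-verified Lean document; each statement's English description precedes it below -/
import Mathlib

section
/- Let M ≥ 1, ξ > 0, and let ŷ_1,…,ŷ_M and y_1,…,y_M be nonnegative reals. Define W_m = e^{-ξŷ_m}/∑_{j=1}^M e^{-ξŷ_j}. Then for every index k ∈ {1,…,M}: ∑_{m=1}^M W_m y_m ≤ y_k + ( ŷ_k − (1/M)∑_{m=1}^M ŷ_m ) + ξ·( (1/M)∑_{m=1}^M ŷ_m² + ∑_{m=1}^M W_m y_m² ) + (log M)/ξ. -/
lemma exp_neg_le_quad (x : ℝ) (hx : 0 ≤ x) : Real.exp (-x) ≤ 1 - x + x ^ 2 := by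
  have h1 : 1 + x ≤ Real.exp x := by linarith [Real.add_one_le_exp x]
  have hx1 : (0:ℝ) < 1 + x := by linarith
  have h2 : Real.exp (-x) ≤ 1 / (1 + x) := by
    rw [Real.exp_neg, le_div_iff₀ hx1, inv_mul_eq_div, div_le_one (Real.exp_pos x)]
    exact h1
  have h3 : (1:ℝ) / (1 + x) ≤ 1 - x + x ^ 2 := by
    rw [div_le_iff₀ hx1]
    nlinarith [pow_nonneg hx 3]
  linarith

theorem randomized_policy_regret (M : ℕ) (hM : 1 ≤ M) (ξ : ℝ) (hξ : 0 < ξ)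
    (yhat y : Fin M → ℝ) (hyhat : ∀ m, 0 ≤ yhat m) (hy : ∀ m, 0 ≤ y m)
    (W : Fin M → ℝ)
    (hW : ∀ m, W m = Real.exp (-ξ * yhat m) / ∑ j, Real.exp (-ξ * yhat j))
    (k : Fin M) :
    ∑ m, W m * y m ≤
      y k + (yhat k - (1 / M) * ∑ m, yhat m)
        + ξ * ((1 / M) * ∑ m, yhat m ^ 2 + ∑ m, W m * y m ^ 2)
        + Real.log M / ξ := by
  have hMpos : (0:ℝ) < M := by exact_mod_cast Nat.lt_of_lt_of_le Nat.zero_lt_one hM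
  set S : ℝ := ∑ j, Real.exp (-ξ * yhat j) with hSdef
  have hSpos : 0 < S :=
    Finset.sum_pos (fun j _ => Real.exp_pos _) ⟨k, Finset.mem_univ k⟩
  have hWpos : ∀ m, 0 < W m := by
    intro m; rw [hW]; exact div_pos (Real.exp_pos _) hSpos
  have hWsum : ∑ m, W m = 1 := by
    simp only [hW]
    rw [← Finset.sum_div, div_self (ne_of_gt hSpos)]
  -- Step 1: bound T := ∑ W m exp(-ξ y m)
  set T : ℝ := ∑ m, W m * Real.exp (-ξ * y m) with hTdef
  have hTpos : 0 < T :=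
    Finset.sum_pos (fun m _ => mul_pos (hWpos m) (Real.exp_pos _)) ⟨k, Finset.mem_univ k⟩
  have hTle : T ≤ 1 - ξ * ∑ m, W m * y m + ξ ^ 2 * ∑ m, W m * y m ^ 2 := by
    have step : T ≤ ∑ m, (W m - ξ * (W m * y m) + ξ ^ 2 * (W m * y m ^ 2)) := by
      apply Finset.sum_le_sum
      intro m _
      have hq : Real.exp (-(ξ * y m)) ≤ 1 - ξ * y m + (ξ * y m) ^ 2 :=
        exp_neg_le_quad (ξ * y m) (mul_nonneg hξ.le (hy m))
      have := mul_le_mul_of_nonneg_left hq (hWpos m).le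
      rw [← neg_mul] at this
      nlinarith [this]
    calc T ≤ ∑ m, (W m - ξ * (W m * y m) + ξ ^ 2 * (W m * y m ^ 2)) := step
      _ = (∑ m, W m) - ξ * ∑ m, W m * y m + ξ ^ 2 * ∑ m, W m * y m ^ 2 := by
          rw [Finset.sum_add_distrib, Finset.sum_sub_distrib, ← Finset.mul_sum, ← Finset.mul_sum]
      _ = 1 - ξ * ∑ m, W m * y m + ξ ^ 2 * ∑ m, W m * y m ^ 2 := by rw [hWsum]
  have hlogT_ub : Real.log T ≤ - (ξ * ∑ m, W m * y m) + ξ ^ 2 * ∑ m, W m * y m ^ 2 := by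
    have := Real.log_le_sub_one_of_pos hTpos
    linarith
  -- Step 2: lower bound on log T via the single term k
  have hTk : W k * Real.exp (-ξ * y k) ≤ T := by
    apply Finset.single_le_sum (f := fun m => W m * Real.exp (-ξ * y m))
      (fun m _ => (mul_pos (hWpos m) (Real.exp_pos _)).le) (Finset.mem_univ k)
  have hlogT_lb : Real.log (W k) + (-ξ * y k) ≤ Real.log T := by
    have h := Real.log_le_log (mul_pos (hWpos k) (Real.exp_pos _)) hTk
    rwa [Real.log_mul (ne_of_gt (hWpos k)) (ne_of_gt (Real.exp_pos _)), Real.log_exp] at h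
  -- Step 3: log W k = -ξ yhat k - log S
  have hlogWk : Real.log (W k) = -ξ * yhat k - Real.log S := by
    rw [hW, Real.log_div (ne_of_gt (Real.exp_pos _)) (ne_of_gt hSpos), Real.log_exp]
  -- Step 4: bound log S
  have hSle : S ≤ M - ξ * ∑ m, yhat m + ξ ^ 2 * ∑ m, yhat m ^ 2 := by
    have step : S ≤ ∑ m : Fin M, (1 - ξ * yhat m + ξ ^ 2 * yhat m ^ 2) := by
      apply Finset.sum_le_sum
      intro m _
      have hq : Real.exp (-(ξ * yhat m)) ≤ 1 - ξ * yhat m + (ξ * yhat m) ^ 2 :=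
        exp_neg_le_quad (ξ * yhat m) (mul_nonneg hξ.le (hyhat m))
      rw [← neg_mul] at hq
      nlinarith [hq]
    calc S ≤ ∑ m : Fin M, (1 - ξ * yhat m + ξ ^ 2 * yhat m ^ 2) := step
      _ = M - ξ * ∑ m, yhat m + ξ ^ 2 * ∑ m, yhat m ^ 2 := by
          rw [Finset.sum_add_distrib, Finset.sum_sub_distrib, ← Finset.mul_sum, ← Finset.mul_sum]
          simp [Finset.card_univ]
  have hlogS : Real.log S ≤ Real.log M - ξ * ((1/M) * ∑ m, yhat m)
      + ξ ^ 2 * ((1/M) * ∑ m, yhat m ^ 2) := by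
    have hdiv : S / M ≤ 1 - ξ * ((1/M) * ∑ m, yhat m) + ξ ^ 2 * ((1/M) * ∑ m, yhat m ^ 2) := by
      rw [div_le_iff₀ hMpos]
      have hM' : (M:ℝ) ≠ 0 := ne_of_gt hMpos
      field_simp
      linarith [hSle]
    have h1 : Real.log (S / M) ≤ S / M - 1 := Real.log_le_sub_one_of_pos (div_pos hSpos hMpos)
    have h2 : Real.log S = Real.log M + Real.log (S / M) := by
      rw [Real.log_div (ne_of_gt hSpos) (ne_of_gt hMpos)]; ring
    rw [h2]; linarith
  -- Combine
  have key : ξ * ∑ m, W m * y m ≤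
      ξ * y k + ξ * yhat k - ξ * ((1/M) * ∑ m, yhat m)
      + ξ ^ 2 * ((1/M) * ∑ m, yhat m ^ 2) + ξ ^ 2 * ∑ m, W m * y m ^ 2
      + Real.log M := by
    rw [hlogWk] at hlogT_lb
    linarith
  have hxne : ξ ≠ 0 := ne_of_gt hξ
  have hfin : (∑ m, W m * y m) * ξ ≤
      (y k + (yhat k - (1 / M) * ∑ m, yhat m)
        + ξ * ((1 / M) * ∑ m, yhat m ^ 2 + ∑ m, W m * y m ^ 2)
        + Real.log M / ξ) * ξ := by
    calc (∑ m, W m * y m) * ξ = ξ * ∑ m, W m * y m := mul_comm _ _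
      _ ≤ ξ * y k + ξ * yhat k - ξ * ((1/M) * ∑ m, yhat m)
          + ξ ^ 2 * ((1/M) * ∑ m, yhat m ^ 2) + ξ ^ 2 * ∑ m, W m * y m ^ 2
          + Real.log M := key
      _ = (y k + (yhat k - (1 / M) * ∑ m, yhat m)
          + ξ * ((1 / M) * ∑ m, yhat m ^ 2 + ∑ m, W m * y m ^ 2)
          + Real.log M / ξ) * ξ := by field_simp; ring
  exact le_of_mul_le_mul_right hfin hξ
end

section
/- Under the assumptions of the previous statement, if 0 < ε̄ < 1 and T = min_m ( x_co − μ_m − √(−2C_m² log(ε̄/M)) ) with T ≥ 0 and x_co − T ≥ μ_m for all m, then ℙ( ∑_m W_m ŷ_m > x_co − T ) ≤ ε̄. -/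
open MeasureTheory

theorem threshold_guarantee (M : ℕ) (hM : 1 ≤ M)
    {Ω : Type*} [MeasurableSpace Ω] (P : Measure Ω) [IsProbabilityMeasure P]
    (yhat : Fin M → Ω → ℝ) (μ C : Fin M → ℝ) (hC : ∀ m, 0 < C m)
    (htail : ∀ m, ∀ t : ℝ, 0 ≤ t →
      P {ω | t ≤ yhat m ω - μ m} ≤ ENNReal.ofReal (Real.exp (-t ^ 2 / (2 * C m ^ 2))))
    (ξ : ℝ) (hξ : 0 < ξ)
    (W : Fin M → Ω → ℝ)
    (hW : ∀ m ω, W m ω = Real.exp (-ξ * yhat m ω) / ∑ j, Real.exp (-ξ * yhat j ω))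
    (ε : ℝ) (hε0 : 0 < ε) (hε1 : ε < 1) (xco T : ℝ)
    (hT : T = Finset.univ.inf'
      (Finset.univ_nonempty_iff.mpr (Fin.pos_iff_nonempty.mp hM))
      (fun m => xco - μ m - Real.sqrt (-2 * C m ^ 2 * Real.log (ε / M))))
    (hT0 : 0 ≤ T) (hTμ : ∀ m, μ m ≤ xco - T) :
    P {ω | xco - T < ∑ m, W m ω * yhat m ω} ≤ ENNReal.ofReal ε := by
  have hMpos : (0:ℝ) < M := by exact_mod_cast hM
  have hεM0 : (0:ℝ) < ε / M := div_pos hε0 hMpos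
  have hεM1 : ε / M < 1 := by
    rw [div_lt_one hMpos]
    calc ε < 1 := hε1
    _ ≤ M := by exact_mod_cast hM
  have hlog : Real.log (ε / M) ≤ 0 := Real.log_nonpos hεM0.le hεM1.le
  have hsub : {ω | xco - T < ∑ m, W m ω * yhat m ω} ⊆
      ⋃ m, {ω | xco - T - μ m ≤ yhat m ω - μ m} := by
    intro ω hω
    simp only [Set.mem_setOf_eq] at hω
    by_contra hc
    simp only [Set.mem_iUnion, Set.mem_setOf_eq, not_exists, not_le] at hc
    have hy : ∀ m, yhat m ω ≤ xco - T := fun m => by linarith [hc m]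
    have hden : (0:ℝ) < ∑ j, Real.exp (-ξ * yhat j ω) := by
      apply Finset.sum_pos (fun j _ => Real.exp_pos _)
      exact Finset.univ_nonempty_iff.mpr (Fin.pos_iff_nonempty.mp hM)
    have hWnn : ∀ m, 0 ≤ W m ω := fun m => by
      rw [hW]; positivity
    have hWsum : ∑ m, W m ω = 1 := by
      simp only [hW]
      rw [← Finset.sum_div, div_self hden.ne']
    have hle : ∑ m, W m ω * yhat m ω ≤ ∑ m, W m ω * (xco - T) := by
      apply Finset.sum_le_sum
      intro m _
      exact mul_le_mul_of_nonneg_left (hy m) (hWnn m)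
    rw [← Finset.sum_mul, hWsum, one_mul] at hle
    linarith
  refine le_trans (measure_mono hsub) (le_trans (measure_iUnion_le
    (fun m => {ω | xco - T - μ m ≤ yhat m ω - μ m})) ?_)
  have hterm : ∀ m : Fin M, P {ω | xco - T - μ m ≤ yhat m ω - μ m} ≤
      ENNReal.ofReal (ε / M) := by
    intro m
    have htm : 0 ≤ xco - T - μ m := by linarith [hTμ m]
    refine (htail m _ htm).trans ?_
    apply ENNReal.ofReal_le_ofReal
    have hs : Real.sqrt (-2 * C m ^ 2 * Real.log (ε / M)) ≤ xco - T - μ m := by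
      have hle : T ≤ xco - μ m - Real.sqrt (-2 * C m ^ 2 * Real.log (ε / M)) := by
        rw [hT]
        exact Finset.inf'_le _ (Finset.mem_univ m)
      linarith
    have hnn : 0 ≤ -2 * C m ^ 2 * Real.log (ε / M) := by nlinarith [sq_nonneg (C m)]
    have hsq : -2 * C m ^ 2 * Real.log (ε / M) ≤ (xco - T - μ m) ^ 2 := by
      calc -2 * C m ^ 2 * Real.log (ε / M)
          = Real.sqrt (-2 * C m ^ 2 * Real.log (ε / M)) ^ 2 := (Real.sq_sqrt hnn).symm
        _ ≤ (xco - T - μ m) ^ 2 := by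
            apply pow_le_pow_left₀ (Real.sqrt_nonneg _) hs
    have hCm := hC m
    have hC2 : (0:ℝ) < 2 * C m ^ 2 := by positivity
    have hdiv : -(xco - T - μ m) ^ 2 / (2 * C m ^ 2) ≤ Real.log (ε / M) := by
      rw [div_le_iff₀ hC2]
      nlinarith
    calc Real.exp (-(xco - T - μ m) ^ 2 / (2 * C m ^ 2))
        ≤ Real.exp (Real.log (ε / M)) := Real.exp_le_exp.mpr hdiv
      _ = ε / M := Real.exp_log hεM0
  calc ∑' m : Fin M, P {ω | xco - T - μ m ≤ yhat m ω - μ m}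
      ≤ ∑' _ : Fin M, ENNReal.ofReal (ε / M) := ENNReal.tsum_le_tsum hterm
    _ = M * ENNReal.ofReal (ε / M) := by
        rw [tsum_fintype]; simp [Finset.sum_const, Finset.card_univ, nsmul_eq_mul]
    _ = ENNReal.ofReal ε := by
        rw [← ENNReal.ofReal_natCast M, ← ENNReal.ofReal_mul (by positivity)]
        congr 1
        field_simp
end

section
/- Let M ≥ 1, ξ > 0, and nonnegative reals ŷ_1,…,ŷ_M, y_1,…,y_M with W_m = e^{-ξŷ_m}/∑_j e^{-ξŷ_j}. Then (1/M)∑_m ŷ_m + ∑_m W_m y_m ≤ ŷ_k + y_k + ξ( (1/M)∑_m ŷ_m² + ∑_m W_m y_m² ) + (log M)/ξ for every k. -/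
/-! Potential argument for exponential weights. Put `A = (1/M) ∑ e^{-ξŷ_m}` and
`B = ∑ W_m e^{-ξ y_m}`. By the choice of `W`, `M · A · B = ∑ e^{-ξ(ŷ_m + y_m)} ≥ e^{-ξ(ŷ_k + y_k)}`,
so `log A + log B ≥ -log M - ξ(ŷ_k + y_k)`. On the other hand `e^{-x} ≤ 1 - x + x²` for `x ≥ 0`
and `log t ≤ t - 1` bound `log` of each weighted average of `e^{-ξ a_m}` by
`-ξ 𝔼 a + ξ² 𝔼 a²`. Comparing the two bounds and dividing by `ξ` gives the claim. -/

open Finset Real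

theorem Real.exp_neg_le_one_sub_add_sq {x : ℝ} (hx : 0 ≤ x) : exp (-x) ≤ 1 - x + x ^ 2 := by
  have hprod : exp (-x) * exp x = 1 := by rw [← exp_add, neg_add_cancel, exp_zero]
  nlinarith [add_one_le_exp x, add_one_le_exp (-x), exp_pos (-x), exp_pos x]

theorem log_sum_mul_exp_neg_le {ι : Type*} [Fintype ι] {w : ι → ℝ} (hw : ∀ m, 0 ≤ w m)
    (hw₁ : ∑ m, w m = 1) {η : ℝ} (hη : 0 ≤ η) {a : ι → ℝ} (ha : ∀ m, 0 ≤ a m) :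
    log (∑ m, w m * exp (-η * a m)) ≤ -η * ∑ m, w m * a m + η ^ 2 * ∑ m, w m * a m ^ 2 := by
  obtain ⟨i, -, hi⟩ : ∃ i ∈ univ, w i ≠ 0 := exists_ne_zero_of_sum_ne_zero (by simp [hw₁])
  have hpos : 0 < ∑ m, w m * exp (-η * a m) :=
    sum_pos' (fun m _ => mul_nonneg (hw m) (exp_pos _).le)
      ⟨i, mem_univ i, mul_pos ((hw i).lt_of_ne' hi) (exp_pos _)⟩
  have hquad : ∑ m, w m * exp (-η * a m) ≤ ∑ m, w m * (1 - η * a m + (η * a m) ^ 2) :=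
    sum_le_sum fun m _ => mul_le_mul_of_nonneg_left
      (by simpa only [neg_mul] using exp_neg_le_one_sub_add_sq (mul_nonneg hη (ha m))) (hw m)
  have hexpand : ∑ m, w m * (1 - η * a m + (η * a m) ^ 2) =
      1 - η * ∑ m, w m * a m + η ^ 2 * ∑ m, w m * a m ^ 2 :=
    calc ∑ m, w m * (1 - η * a m + (η * a m) ^ 2)
        = ∑ m, (w m - η * (w m * a m) + η ^ 2 * (w m * a m ^ 2)) :=
          sum_congr rfl fun m _ => by ring
      _ = _ := by rw [sum_add_distrib, sum_sub_distrib, ← mul_sum, ← mul_sum, hw₁]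
  linarith [log_le_sub_one_of_pos hpos]

theorem add_le_log_sum_exp_add_log_sum_softmax_mul_exp {ι : Type*} [Fintype ι]
    (a b : ι → ℝ) (k : ι) :
    a k + b k ≤ log (∑ j, exp (a j)) + log (∑ m, exp (a m) / (∑ j, exp (a j)) * exp (b m)) := by
  have hS : 0 < ∑ j, exp (a j) := sum_pos (fun j _ => exp_pos _) ⟨k, mem_univ k⟩
  have hprod : (∑ j, exp (a j)) * ∑ m, exp (a m) / (∑ j, exp (a j)) * exp (b m) =
      ∑ m, exp (a m + b m) := by
    rw [mul_sum]
    exact sum_congr rfl fun m _ => by rw [exp_add]; field_simp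
  have hB : 0 < ∑ m, exp (a m) / (∑ j, exp (a j)) * exp (b m) :=
    sum_pos (fun m _ => by positivity) ⟨k, mem_univ k⟩
  rw [← log_mul hS.ne' hB.ne', hprod, ← log_exp (a k + b k)]
  exact log_le_log (exp_pos _)
    (single_le_sum (f := fun m => exp (a m + b m)) (fun m _ => (exp_pos _).le) (mem_univ k))

theorem regret_rearranged (M : ℕ) (hM : 1 ≤ M) (ξ : ℝ) (hξ : 0 < ξ)
    (yhat y : Fin M → ℝ) (hyhat : ∀ m, 0 ≤ yhat m) (hy : ∀ m, 0 ≤ y m)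
    (W : Fin M → ℝ)
    (hW : ∀ m, W m = Real.exp (-ξ * yhat m) / ∑ j, Real.exp (-ξ * yhat j))
    (k : Fin M) :
    (1 / M) * ∑ m, yhat m + ∑ m, W m * y m ≤
      yhat k + y k + ξ * ((1 / M) * ∑ m, yhat m ^ 2 + ∑ m, W m * y m ^ 2)
        + Real.log M / ξ := by
  have hMpos : (0 : ℝ) < M := by exact_mod_cast hM
  have hS : 0 < ∑ j, exp (-ξ * yhat j) := sum_pos (fun j _ => exp_pos _) ⟨k, mem_univ k⟩
  have hW₀ : ∀ m, 0 ≤ W m := fun m => hW m ▸ div_nonneg (exp_pos _).le hS.le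
  have hW₁ : ∑ m, W m = 1 := by simp only [hW, ← sum_div, div_self hS.ne']
  have hAvg := log_sum_mul_exp_neg_le (w := fun _ => 1 / (M : ℝ)) (fun _ => by positivity)
    (by simp [hMpos.ne']) hξ.le hyhat
  have hWeighted := log_sum_mul_exp_neg_le hW₀ hW₁ hξ.le hy
  have hLower := add_le_log_sum_exp_add_log_sum_softmax_mul_exp
    (fun m => -ξ * yhat m) (fun m => -ξ * y m) k
  simp only [← mul_sum] at hAvg
  rw [log_mul (by positivity) hS.ne', one_div, log_inv] at hAvg
  simp only [← hW] at hLower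
  have hScaled : ξ * ((1 / M) * ∑ m, yhat m + ∑ m, W m * y m) ≤
      ξ * (yhat k + y k + ξ * ((1 / M) * ∑ m, yhat m ^ 2 + ∑ m, W m * y m ^ 2)) + log M := by
    rw [one_div]
    linarith
  rwa [← mul_le_mul_iff_right₀ hξ, mul_add _ _ (log M / ξ), mul_div_cancel₀ _ hξ.ne']
end
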